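/- If C is a Hermitian self-dual linear code of length n over R = F_q + uF_q, then its Gray image Φ(C) is a Hermitian self-dual linear code of length 2n over F_q; likewise if C is Hermitian dual-containing (C^{⊥_H} ⊆ C), then Φ(C)^{⊥_H} ⊆ Φ(C). -/

import Mathlib

/-
Write `⟨x, c⟩ = ∑ xᵢ c̄ᵢ ∈ R` for the Hermitian form on `R^n`, with `u`-free part `s₀` and
`u`-part `s₁`. Since `α^q = α` (as `α² = -1` and `q ≡ 1 mod 4`) and Frobenius is additive, the
Hermitian form of `Φ x` and `Φ c` is `s₀ + s₁`. As `C` is an `R`-module, `u c ∈ C` too, and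
`⟨x, u c⟩ = u ⟨x, c⟩` has `s₀ + s₁`-value `s₀`. So `Φ x ⊥ Φ(C)` forces `⟨x, c⟩ = 0` for all
`c ∈ C`; since `Φ` is bijective, `Φ(C)^⊥ = Φ(C^⊥)`, and both claims follow.
-/

open TrivSqZeroExt

/-- The Gray map `Φ : R^n → F_q^(2n)`. -/
noncomputable def grayMap {F : Type*} [CommRing F] (α : F) (n : ℕ)
    (x : Fin n → DualNumber F) : Fin n × Fin 2 → F :=
  fun j => if j.2 = 0 then α * (x j.1).snd else (x j.1).fst + (x j.1).snd

/-- Conjugation `(a + ub)‾ = a^(p^m) + u b^(p^m)` on `R = F_q + uF_q`. -/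
noncomputable def dnConj {F : Type*} [CommRing F] (p m : ℕ) (z : DualNumber F) :
    DualNumber F :=
  TrivSqZeroExt.inl (z.fst ^ p ^ m) + TrivSqZeroExt.inr (z.snd ^ p ^ m)

/-- The Hermitian dual of a set of words of length `n` over `R`. -/
def hermDualR {F : Type*} [CommRing F] (p m n : ℕ)
    (S : Set (Fin n → DualNumber F)) : Set (Fin n → DualNumber F) :=
  {x | ∀ c ∈ S, ∑ i, x i * dnConj p m (c i) = 0}

/-- The Hermitian dual of a set of words of length `2n` over `F_q`. -/
def hermDualF {F : Type*} [CommRing F] (p m n : ℕ)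
    (S : Set (Fin n × Fin 2 → F)) : Set (Fin n × Fin 2 → F) :=
  {y | ∀ c ∈ S, ∑ j, y j * (c j) ^ p ^ m = 0}

lemma pow_eq_self_of_sq_eq_neg_one {M : Type*} [Monoid M] [HasDistribNeg M] {α : M}
    (hα : α ^ 2 = -1) {N : ℕ} (hN : N % 4 = 1) : α ^ N = α := by
  have hα4 : α ^ 4 = 1 := by rw [show 4 = 2 * 2 from rfl, pow_mul, hα, neg_one_sq]
  rw [← Nat.div_add_mod N 4, hN, pow_succ, pow_mul, hα4, one_pow, one_mul]

section GrayMap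

variable {F : Type*} [CommRing F] {p m : ℕ}

lemma fst_mul_dnConj (z w : DualNumber F) :
    (z * dnConj p m w).fst = z.fst * w.fst ^ p ^ m := by
  simp [dnConj, fst_mul]

lemma snd_mul_dnConj (z w : DualNumber F) :
    (z * dnConj p m w).snd = z.fst * w.snd ^ p ^ m + z.snd * w.fst ^ p ^ m := by
  simp [dnConj, snd_mul, smul_eq_mul]

lemma dnConj_inr_one_mul (hp : p ≠ 0) (z : DualNumber F) :
    dnConj p m (inr 1 * z) = inr 1 * dnConj p m z := by
  ext <;> simp [dnConj, fst_mul, snd_mul, smul_eq_mul, zero_pow (pow_ne_zero m hp)]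

lemma grayMap_surjective {α : F} (hα : IsUnit α) (n : ℕ) :
    Function.Surjective (grayMap α n) := by
  obtain ⟨β, hβ⟩ := hα.exists_left_inv
  intro y
  refine ⟨fun i => inl (y (i, 1) - β * y (i, 0)) + inr (β * y (i, 0)), ?_⟩
  funext ⟨i, s⟩
  fin_cases s <;> simp [grayMap]
  linear_combination y (i, 0) * hβ

lemma sum_grayMap_mul_pow [CharP F p] [Fact p.Prime] {α : F} (hα : α ^ 2 = -1)
    (hαq : α ^ p ^ m = α) {n : ℕ} (x c : Fin n → DualNumber F) :
    ∑ j, grayMap α n x j * grayMap α n c j ^ p ^ m =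
      (∑ i, x i * dnConj p m (c i)).fst + (∑ i, x i * dnConj p m (c i)).snd := by
  rw [fst_sum, snd_sum, ← Finset.sum_add_distrib, Fintype.sum_prod_type]
  refine Finset.sum_congr rfl fun i _ => ?_
  simp only [Fin.sum_univ_two, grayMap, fst_mul_dnConj, snd_mul_dnConj, if_true,
    if_neg one_ne_zero, mul_pow, hαq, add_pow_char_pow]
  linear_combination (x i).snd * (c i).snd ^ p ^ m * hα

lemma sum_mul_dnConj_inr_one_smul (hp : p ≠ 0) {n : ℕ} (x c : Fin n → DualNumber F) :
    ∑ i, x i * dnConj p m (((inr 1 : DualNumber F) • c) i) =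
      inr 1 * ∑ i, x i * dnConj p m (c i) := by
  simp only [Pi.smul_apply, smul_eq_mul, dnConj_inr_one_mul hp, Finset.mul_sum]
  exact Finset.sum_congr rfl fun i _ => mul_left_comm _ _ _

theorem hermDualF_image_grayMap [CharP F p] [Fact p.Prime] {α : F} (hα : α ^ 2 = -1)
    (hαq : α ^ p ^ m = α) {n : ℕ} (C : Submodule (DualNumber F) (Fin n → DualNumber F)) :
    hermDualF p m n (grayMap α n '' C) = grayMap α n '' hermDualR p m n C := by
  apply Set.Subset.antisymm
  · intro y hy
    have hα_unit : IsUnit α := .of_mul_eq_one (-α) (by linear_combination -hα)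
    obtain ⟨x, rfl⟩ := grayMap_surjective hα_unit n y
    refine ⟨x, fun c hc => ?_, rfl⟩
    have hfst_add_snd := hy _ ⟨c, hc, rfl⟩
    have hfst := hy _ ⟨inr 1 • c, C.smul_mem _ hc, rfl⟩
    rw [sum_grayMap_mul_pow hα hαq] at hfst_add_snd hfst
    rw [sum_mul_dnConj_inr_one_smul (Fact.out : p.Prime).ne_zero] at hfst
    simp only [fst_mul, snd_mul, fst_inr, snd_inr, zero_mul, zero_add, smul_eq_mul, one_mul,
      op_smul_eq_mul] at hfst
    rw [hfst, zero_add] at hfst_add_snd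
    exact TrivSqZeroExt.ext hfst hfst_add_snd
  · rintro _ ⟨x, hx, rfl⟩ _ ⟨c, hc, rfl⟩
    rw [sum_grayMap_mul_pow hα hαq, hx c hc, fst_zero, snd_zero, add_zero]

end GrayMap

theorem stmt8_general (p m n : ℕ) [Fact p.Prime]
    (F : Type*) [Field F] [Fintype F] (hF : Fintype.card F = p ^ (2 * m))
    (hpm : p ^ m % 4 = 1) (α : F) (hα : α ^ 2 = -1)
    (C : Submodule (DualNumber F) (Fin n → DualNumber F)) :
    (hermDualR p m n (C : Set (Fin n → DualNumber F)) = (C : Set (Fin n → DualNumber F)) →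
      hermDualF p m n (grayMap α n '' (C : Set (Fin n → DualNumber F))) =
        grayMap α n '' (C : Set (Fin n → DualNumber F))) ∧
    (hermDualR p m n (C : Set (Fin n → DualNumber F)) ⊆ (C : Set (Fin n → DualNumber F)) →
      hermDualF p m n (grayMap α n '' (C : Set (Fin n → DualNumber F))) ⊆
        grayMap α n '' (C : Set (Fin n → DualNumber F))) := by
  have : CharP F p := charP_of_card_eq_prime_pow hF
  rw [hermDualF_image_grayMap hα (pow_eq_self_of_sq_eq_neg_one hα hpm) C]
  exact ⟨fun h => by rw [h], Set.image_mono⟩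

/-- If `C` is Hermitian self-dual over `R`, then `Φ(C)` is Hermitian
self-dual over `F_q`; and if `C` is Hermitian dual-containing, so is `Φ(C)`. -/
theorem stmt8 (p m n : ℕ) [Fact p.Prime] (hm : 1 ≤ m)
    (F : Type*) [Field F] [Fintype F] (hF : Fintype.card F = p ^ (2 * m))
    (hpm : p ^ m % 4 = 1) (α : F) (hα : α ^ 2 = -1)
    (C : Submodule (DualNumber F) (Fin n → DualNumber F)) :
    (hermDualR p m n (C : Set (Fin n → DualNumber F)) = (C : Set (Fin n → DualNumber F)) →
      hermDualF p m n (grayMap α n '' (C : Set (Fin n → DualNumber F))) =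
        grayMap α n '' (C : Set (Fin n → DualNumber F))) ∧
    (hermDualR p m n (C : Set (Fin n → DualNumber F)) ⊆ (C : Set (Fin n → DualNumber F)) →
      hermDualF p m n (grayMap α n '' (C : Set (Fin n → DualNumber F))) ⊆
        grayMap α n '' (C : Set (Fin n → DualNumber F))) :=
  stmt8_general p m n F hF hpm α hα C
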